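/- For every real t > 1, (4/3)·(t + 5t⁻³ − 6t⁻⁵)/(√(t² − 1)·(t^(−2/3) + 6t⁻⁴ + t⁻²)) − arccosh(t) > 0. -/
import Mathlib

open Real

noncomputable def arccosh (t : ℝ) : ℝ := Real.log (t + Real.sqrt (t ^ 2 - 1))

set_option maxHeartbeats 1000000 in
lemma key_poly (u : ℝ) (hu : 1 ≤ u) :
    2*u^6*(u^10+u^6+6)^2 < 16/9*(u^3+1)*(u^12+u^6+6)^2 := by
  have hv : (0:ℝ) ≤ u - 1 := by linarith
  have e : 16/9*(u^3+1)*(u^12+u^6+6)^2 - 2*u^6*(u^10+u^6+6)^2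
      = (896/9:ℝ) + 256/3*(u-1) + 640/3*(u-1)^2 + 10432/9*(u-1)^3 + 18976/3*(u-1)^4 + 102352/3*(u-1)^5 + 1375424/9*(u-1)^6 + 533408*(u-1)^7 + 1481854*(u-1)^8 + 10138372/3*(u-1)^9 + 19421354/3*(u-1)^10 + 31716992/3*(u-1)^11 + 133657568/9*(u-1)^12 + 18031744*(u-1)^13 + 18967064*(u-1)^14 + 51865328/3*(u-1)^15 + 13636628*(u-1)^16 + 9280008*(u-1)^17 + 48801020/9*(u-1)^18 + 8104048/3*(u-1)^19 + 3408904/3*(u-1)^20 + 3583744/9*(u-1)^21 + 342320/3*(u-1)^22 + 78128/3*(u-1)^23 + 40966/9*(u-1)^24 + 572*(u-1)^25 + 46*(u-1)^26 + 16/9*(u-1)^27 := by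
    ring
  linarith [pow_nonneg hv 2, pow_nonneg hv 3, pow_nonneg hv 4, pow_nonneg hv 5,
    pow_nonneg hv 6, pow_nonneg hv 7, pow_nonneg hv 8, pow_nonneg hv 9,
    pow_nonneg hv 10, pow_nonneg hv 11, pow_nonneg hv 12, pow_nonneg hv 13,
    pow_nonneg hv 14, pow_nonneg hv 15, pow_nonneg hv 16, pow_nonneg hv 17,
    pow_nonneg hv 18, pow_nonneg hv 19, pow_nonneg hv 20, pow_nonneg hv 21,
    pow_nonneg hv 22, pow_nonneg hv 23, pow_nonneg hv 24, pow_nonneg hv 25,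
    pow_nonneg hv 26, pow_nonneg hv 27, pow_nonneg hv 1, e]

lemma arccosh_le_sqrt (t : ℝ) (ht : 1 ≤ t) : arccosh t ≤ Real.sqrt (2*(t-1)) := by
  have h1 : (0:ℝ) ≤ 2*(t-1) := by linarith
  set x := Real.sqrt (2*(t-1)) with hx
  have hx0 : 0 ≤ x := Real.sqrt_nonneg _
  have hx2 : x^2 = 2*(t-1) := Real.sq_sqrt h1
  have hsh : x/2 ≤ Real.sinh (x/2) := by
    rcases eq_or_lt_of_le hx0 with h | h
    · simp [← h]
    · exact (Real.self_lt_sinh_iff.2 (by linarith)).le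
  have hch : t ≤ Real.cosh x := by
    have h2 : Real.cosh x = 2 * Real.sinh (x/2)^2 + 1 := by
      have h3 := Real.cosh_two_mul (x/2)
      have h4 := Real.cosh_sq (x/2)
      have h5 : (2:ℝ) * (x/2) = x := by ring
      rw [h5] at h3
      rw [h3, h4]; ring
    nlinarith [hsh, hx0]
  have hsinh0 : 0 ≤ Real.sinh x := Real.sinh_nonneg_iff.2 hx0
  have hsx : Real.sqrt (t^2-1) ≤ Real.sinh x := by
    have h3 : Real.sinh x ^ 2 = Real.cosh x ^ 2 - 1 := Real.sinh_sq x
    have h6 : t^2 - 1 ≤ Real.sinh x ^ 2 := by nlinarith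
    calc Real.sqrt (t^2-1) ≤ Real.sqrt (Real.sinh x ^ 2) := Real.sqrt_le_sqrt h6
      _ = Real.sinh x := by rw [Real.sqrt_sq hsinh0]
  have hts : 0 < t + Real.sqrt (t^2-1) := by
    have := Real.sqrt_nonneg (t^2-1); linarith
  show Real.log (t + Real.sqrt (t^2-1)) ≤ x
  rw [Real.log_le_iff_le_exp hts]
  calc t + Real.sqrt (t^2-1) ≤ Real.cosh x + Real.sinh x := by linarith
    _ = Real.exp x := Real.cosh_add_sinh x

set_option maxHeartbeats 1000000 in
theorem stmt_10 (t : ℝ) (ht : 1 < t) :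
    (4 / 3) * (t + 5 * (t ^ 3)⁻¹ - 6 * (t ^ 5)⁻¹) /
        (Real.sqrt (t ^ 2 - 1) * (t ^ (-(2 : ℝ) / 3) + 6 * (t ^ 4)⁻¹ + (t ^ 2)⁻¹))
      - arccosh t > 0 := by
  have ht0 : (0:ℝ) < t := by linarith
  set u := t ^ ((1:ℝ)/3) with hu_def
  have hu1 : (1:ℝ) < u := by
    rw [hu_def]
    exact (Real.one_lt_rpow_iff_of_pos ht0).2 (Or.inl ⟨ht, by norm_num⟩)
  have hu0 : (0:ℝ) < u := lt_trans one_pos hu1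
  have hu3 : u ^ 3 = t := by
    rw [hu_def, ← Real.rpow_natCast (t ^ ((1:ℝ)/3)) 3, ← Real.rpow_mul ht0.le]
    norm_num
  have hrw : t ^ (-(2:ℝ)/3) = (u^2)⁻¹ := by
    rw [hu_def, ← Real.rpow_natCast (t ^ ((1:ℝ)/3)) 2, ← Real.rpow_mul ht0.le,
      ← Real.rpow_neg ht0.le]
    norm_num
  have hspos : 0 < Real.sqrt (t^2-1) := Real.sqrt_pos.2 (by nlinarith)
  have hDpos : 0 < t ^ (-(2:ℝ)/3) + 6 * (t^4)⁻¹ + (t^2)⁻¹ := by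
    rw [hrw]; positivity
  have hden : 0 < Real.sqrt (t^2-1) * (t ^ (-(2:ℝ)/3) + 6 * (t^4)⁻¹ + (t^2)⁻¹) :=
    mul_pos hspos hDpos
  -- the u-forms
  have hDu : t ^ (-(2:ℝ)/3) + 6 * (t^4)⁻¹ + (t^2)⁻¹ = (u^10+u^6+6)/u^12 := by
    rw [hrw, ← hu3]
    field_simp
    ring
  have hNu : t + 5 * (t^3)⁻¹ - 6 * (t^5)⁻¹ = (u^6-1)*(u^12+u^6+6)/u^15 := by
    rw [← hu3]
    field_simp
    ring
  have hu6 : (1:ℝ) < u^6 := one_lt_pow₀ hu1 (by norm_num)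
  have hNpos : 0 < t + 5 * (t^3)⁻¹ - 6 * (t^5)⁻¹ := by
    rw [hNu]
    have h1 : (0:ℝ) < u^6 - 1 := by linarith
    positivity
  -- main inequality: sqrt(2(t-1)) * denom < (4/3) * N
  have hmain : Real.sqrt (2*(t-1)) *
      (Real.sqrt (t^2-1) * (t ^ (-(2:ℝ)/3) + 6 * (t^4)⁻¹ + (t^2)⁻¹)) <
      4/3 * (t + 5 * (t^3)⁻¹ - 6 * (t^5)⁻¹) := by
    have ha2 : Real.sqrt (t+1) ^ 2 = t+1 := Real.sq_sqrt (by linarith)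
    have ha0 : 0 ≤ Real.sqrt (t+1) := Real.sqrt_nonneg _
    have hr2 : Real.sqrt 2 ^ 2 = 2 := Real.sq_sqrt (by norm_num)
    have hr0 : 0 ≤ Real.sqrt 2 := Real.sqrt_nonneg _
    have hb : Real.sqrt (t-1) * Real.sqrt (t-1) = t - 1 :=
      Real.mul_self_sqrt (by linarith)
    have hsplit : Real.sqrt (t^2-1) = Real.sqrt (t-1) * Real.sqrt (t+1) := by
      rw [← Real.sqrt_mul (by linarith : (0:ℝ) ≤ t-1)]
      ring_nf
    have hsplit2 : Real.sqrt (2*(t-1)) = Real.sqrt 2 * Real.sqrt (t-1) :=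
      Real.sqrt_mul (by norm_num) _
    have hL : Real.sqrt (2*(t-1)) *
        (Real.sqrt (t^2-1) * (t ^ (-(2:ℝ)/3) + 6 * (t^4)⁻¹ + (t^2)⁻¹)) =
        Real.sqrt 2 * Real.sqrt (t+1) * (t-1) *
          (t ^ (-(2:ℝ)/3) + 6 * (t^4)⁻¹ + (t^2)⁻¹) := by
      rw [hsplit, hsplit2]
      linear_combination (Real.sqrt 2 * Real.sqrt (t+1) *
        (t ^ (-(2:ℝ)/3) + 6 * (t^4)⁻¹ + (t^2)⁻¹)) * hb
    rw [hL]
    have hRnn : (0:ℝ) ≤ 4/3 * (t + 5 * (t^3)⁻¹ - 6 * (t^5)⁻¹) := by linarith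
    refine lt_of_pow_lt_pow_left₀ 2 hRnn ?_
    have hsq : (Real.sqrt 2 * Real.sqrt (t+1) * (t-1) *
        (t ^ (-(2:ℝ)/3) + 6 * (t^4)⁻¹ + (t^2)⁻¹))^2
        = 2*(t+1)*(t-1)^2*(t ^ (-(2:ℝ)/3) + 6 * (t^4)⁻¹ + (t^2)⁻¹)^2 := by
      linear_combination ((Real.sqrt (t+1))^2*(t-1)^2*
          ((t ^ (-(2:ℝ)/3) + 6 * (t^4)⁻¹ + (t^2)⁻¹))^2) * hr2 +
        (2*(t-1)^2*((t ^ (-(2:ℝ)/3) + 6 * (t^4)⁻¹ + (t^2)⁻¹))^2) * ha2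
    rw [hsq]
    have hkey := key_poly u hu1.le
    have hT : t + 1 = u^3 + 1 := by rw [← hu3]
    have ht1 : t - 1 = u^3 - 1 := by rw [← hu3]
    have hune : u ≠ 0 := ne_of_gt hu0
    have hdiff : (4/3 * (t + 5 * (t^3)⁻¹ - 6 * (t^5)⁻¹))^2
        - 2*(t+1)*(t-1)^2*(t ^ (-(2:ℝ)/3) + 6 * (t^4)⁻¹ + (t^2)⁻¹)^2
        = ((u^3-1)^2*(u^3+1)/u^30) *
          (16/9*(u^3+1)*(u^12+u^6+6)^2 - 2*u^6*(u^10+u^6+6)^2) := by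
      rw [hDu, hNu, hT, ht1]
      field_simp
      ring
    have hfac : (0:ℝ) < (u^3-1)^2*(u^3+1)/u^30 := by
      have h1 : (0:ℝ) < u^3 - 1 := by nlinarith
      positivity
    linarith [mul_pos hfac (sub_pos.2 hkey), hdiff]
  have harccosh := arccosh_le_sqrt t ht.le
  rw [gt_iff_lt, sub_pos]
  rw [lt_div_iff₀ hden]
  calc arccosh t *
      (Real.sqrt (t ^ 2 - 1) * (t ^ (-(2:ℝ)/3) + 6 * (t ^ 4)⁻¹ + (t ^ 2)⁻¹))
      ≤ Real.sqrt (2*(t-1)) *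
      (Real.sqrt (t ^ 2 - 1) * (t ^ (-(2:ℝ)/3) + 6 * (t ^ 4)⁻¹ + (t ^ 2)⁻¹)) := by
        exact mul_le_mul_of_nonneg_right harccosh hden.le
    _ < 4/3 * (t + 5 * (t^3)⁻¹ - 6 * (t^5)⁻¹) := hmain
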